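/- Let A = (X,Q,Y,φ,ψ) be a finite Mealy automaton such that the induced function f_q : X^ω → Y^ω is bijective for some state q. Then |X| = |Y|. -/
import Mathlib


/-- State of a Mealy automaton with transition `φ` after reading the first `n`
letters of the infinite input `u`, starting from `q`. -/
def runState {Q X : Type*} (φ : Q → X → Q) (q : Q) (u : ℕ → X) : ℕ → Q
  | 0 => q
  | n + 1 => φ (runState φ q u n) (u n)

lemma runState_congr_prefix {Q X : Type*} (φ : Q → X → Q) (q : Q) {u v : ℕ → X} {n : ℕ}
    (h : ∀ i < n, u i = v i) : ∀ k, k ≤ n → runState φ q u k = runState φ q v k := by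
  intro k hk
  induction k with
  | zero => rfl
  | succ m ih =>
    simp only [runState, ih (Nat.le_of_succ_le hk), h m (Nat.lt_of_succ_le hk)]

lemma runState_congr_tail {Q X : Type*} (φ : Q → X → Q) (q : Q) {u v : ℕ → X} {n : ℕ}
    (hs : runState φ q u n = runState φ q v n) (h : ∀ i, n ≤ i → u i = v i) :
    ∀ k, n ≤ k → runState φ q u k = runState φ q v k := by
  intro k hk
  induction k with
  | zero => exact Nat.le_zero.mp hk ▸ hs
  | succ m ih =>
    rcases Nat.lt_or_ge n (m+1) with hlt | hge
    · have hm : n ≤ m := Nat.lt_succ_iff.mp hlt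
      simp only [runState, ih hm, h m hm]
    · exact (Nat.le_antisymm hk hge) ▸ hs

lemma pow_le_of_forall_pow_le_pow_mul {a b c : ℕ} (h : ∀ n, a ^ n ≤ b ^ n * c) : a ≤ b := by
  by_contra hab
  push_neg at hab
  have hb1 : b + 1 ≤ a := hab
  rcases Nat.eq_zero_or_pos b with rfl | hb
  · have := h 1
    simp at this
    omega
  -- real argument: ((b+1)/b)^n unbounded
  have hbR : (0:ℝ) < b := by exact_mod_cast hb
  have hgt : (1:ℝ) < (b+1)/b := by
    rw [lt_div_iff₀ hbR]; linarith
  obtain ⟨n, hn⟩ := pow_unbounded_of_one_lt (c : ℝ) hgt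
  have h1 : (c:ℝ) * b ^ n < (b+1) ^ n := by
    have := mul_lt_mul_of_pos_right hn (pow_pos hbR n)
    rwa [div_pow, div_mul_cancel₀] at this
    exact pow_ne_zero _ (ne_of_gt hbR)
  have h2 : ((b+1) : ℝ) ^ n ≤ (a:ℝ) ^ n := by
    apply pow_le_pow_left₀ (by positivity)
    exact_mod_cast hb1
  have h3 : (a:ℝ) ^ n ≤ (b:ℝ) ^ n * c := by exact_mod_cast h n
  nlinarith

/-- If `A = (X,Q,Y,φ,ψ)` is a finite Mealy automaton whose induced function
`f_q : X^ω → Y^ω` is bijective for some state `q`, then `|X| = |Y|`. -/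
theorem stmt18 {X Y Q : Type*} [Fintype X] [Fintype Y] [Fintype Q]
    [Nonempty X] [Nonempty Y]
    (φ : Q → X → Q) (ψ : Q → X → Y) (q : Q)
    (hbij : Function.Bijective fun (u : ℕ → X) (n : ℕ) => ψ (runState φ q u n) (u n)) :
    Fintype.card X = Fintype.card Y := by
  set F : (ℕ → X) → (ℕ → Y) := fun u n => ψ (runState φ q u n) (u n) with hF
  -- |Y| ≤ |X| : x ↦ ψ q x is surjective
  have hYX : Fintype.card Y ≤ Fintype.card X := by
    apply Fintype.card_le_of_surjective (fun x => ψ q x)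
    intro y
    obtain ⟨u, hu⟩ := hbij.surjective (fun _ => y)
    exact ⟨u 0, congrFun hu 0⟩
  -- extension of a prefix to an infinite word
  have hXY : Fintype.card X ≤ Fintype.card Y := by
    apply pow_le_of_forall_pow_le_pow_mul (c := Fintype.card Q)
    intro n
    let ext : (Fin n → X) → (ℕ → X) := fun p i =>
      if h : i < n then p ⟨i, h⟩ else Classical.arbitrary X
    have hext : ∀ p : Fin n → X, ∀ i (h : i < n), ext p i = p ⟨i, h⟩ := by
      intro p i h; simp [ext, h]
    let G : (Fin n → X) → (Fin n → Y) × Q :=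
      fun p => (fun i => F (ext p) i, runState φ q (ext p) n)
    have hGinj : Function.Injective G := by
      intro p p' h
      have h1 : ∀ i : Fin n, F (ext p) i = F (ext p') i := fun i =>
        congrFun (congrArg Prod.fst h) i
      have h2 : runState φ q (ext p) n = runState φ q (ext p') n :=
        congrArg Prod.snd h
      set u := ext p with hu
      set w : ℕ → X := fun i => if i < n then ext p' i else u i with hw
      have hwpre : ∀ i < n, w i = ext p' i := by intro i hi; simp [hw, hi]
      have hwtail : ∀ i, n ≤ i → w i = u i := by
        intro i hi; simp [hw, Nat.not_lt.mpr hi]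
      have hFuw : F u = F w := by
        funext i
        rcases Nat.lt_or_ge i n with hi | hi
        · -- F w i = F (ext p') i = F u i
          have : F w i = F (ext p') i := by
            simp only [hF]
            rw [runState_congr_prefix φ q hwpre i (Nat.le_of_lt hi), hwpre i hi]
          rw [this]
          simpa using h1 ⟨i, hi⟩
        · have hsn : runState φ q u n = runState φ q w n := by
            rw [h2, runState_congr_prefix φ q hwpre n (le_refl n)]
          have hs := runState_congr_tail φ q hsn (fun j hj => (hwtail j hj).symm) i hi
          simp only [hF]
          rw [hs, hwtail i hi]
      have huw : u = w := hbij.injective hFuw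
      funext i
      have : u i = ext p' i := by rw [huw]; exact hwpre i i.2
      rw [hu] at this
      rw [hext p i i.2, hext p' i i.2] at this
      simpa using this
    calc Fintype.card X ^ n = Fintype.card (Fin n → X) := by
          simp [Fintype.card_fun]
      _ ≤ Fintype.card ((Fin n → Y) × Q) := Fintype.card_le_of_injective G hGinj
      _ = Fintype.card Y ^ n * Fintype.card Q := by simp [Fintype.card_fun]
  omega
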